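/- Let α ≥ 0 and b > 0. Then x · (1 − I_{α+1}(bx)/I_α(bx)) converges to (2α+1)/(2b) as x → ∞. Equivalently, the quantity P̂_b(x) := −x (I_{α+1}(bx)/I_α(bx) − 1) satisfies P̂_b(x) → (2α+1)/(2b) as x → ∞. -/

import Mathlib

open Real Filter

/-- The modified Bessel function of the first kind,
`I_α(z) = ∑_{m≥0} (z/2)^{2m+α} / (m! Γ(m+α+1))`. -/
noncomputable def besselI (α z : ℝ) : ℝ :=
  ∑' m : ℕ, (z / 2) ^ (2 * (m : ℝ) + α) / ((Nat.factorial m : ℝ) * Real.Gamma ((m : ℝ) + α + 1))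

/-!
Write `I_ν(z) = (z/2)^ν S_ν((z/2)²)` with the entire function `S_ν(w) = ∑ wᵐ / (m! Γ(m+ν+1))`,
which satisfies `S_ν' = S_{ν+1}` and `S_ν(w) = (ν+1) S_{ν+1}(w) + w S_{ν+2}(w)`. These give the
derivative and the three-term recurrence of `I_ν`, and `I_{ν+1} < I_ν` on `(0, ∞)`. Consequently
`H(z) = z (1 - I_{α+1}(z) / I_α(z))` stays in `(0, 2α + 2]` and solves the Riccati equation
`H' + 2H = 2α + 1 + H (H - 2α) / z`, whose right-hand side tends to `2α + 1`; comparison with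
solutions of `B' + 2B = const` forces `H → α + 1/2`, and `z = bx` gives the limit `(2α+1)/(2b)`.
-/

open Set Topology
open scoped Nat

theorem eventually_lt_of_deriv_add_mul_le {f f' : ℝ → ℝ} {c L M : ℝ} (hc : 0 < c) (hLM : L < M)
    (hf : ∀ᶠ x in atTop, HasDerivAt f (f' x) x)
    (h : ∀ᶠ x in atTop, f' x + c * f x ≤ c * L) : ∀ᶠ x in atTop, f x < M := by
  obtain ⟨a, ha⟩ := (hf.and h).exists_forall_of_atTop
  have hδ : 0 < (M - L) / 2 := by linarith
  -- `B` solves `B' + c B = c (L + M) / 2`, starts above `f` and tends to `(L + M) / 2`; where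
  -- `f` touches `B` we get `f' < B'`, so `f` stays below `B`.
  set K := |f a - L|
  let B : ℝ → ℝ := fun x => L + (M - L) / 2 + K * exp (-(c * (x - a)))
  have hB (x : ℝ) : HasDerivAt B (-(c * (K * exp (-(c * (x - a)))))) x := by
    have := ((((hasDerivAt_id' x).sub_const a).const_mul c).fun_neg.exp.const_mul K).const_add
      (L + (M - L) / 2)
    exact this.congr_deriv (by ring)
  have hfB {x : ℝ} (hx : a ≤ x) : f x ≤ B x := by
    refine image_le_of_deriv_right_lt_deriv_boundary' (a := a) (b := x)
      (fun y hy => (ha y hy.1).1.continuousAt.continuousWithinAt)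
      (fun y hy => (ha y hy.1).1.hasDerivWithinAt) ?_
      (fun y _ => (hB y).continuousAt.continuousWithinAt) (fun y _ => (hB y).hasDerivWithinAt)
      (fun y hy hfy => ?_) (right_mem_Icc.2 hx)
    · have := le_abs_self (f a - L)
      simp only [B, sub_self, mul_zero, neg_zero, exp_zero, mul_one]
      linarith
    · have hy' := (ha y hy.1).2
      simp only [hfy, B] at hy' ⊢
      nlinarith [mul_pos hc hδ]
  have hBlim : Tendsto B atTop (𝓝 (L + (M - L) / 2)) := by
    have := ((tendsto_exp_neg_atTop_nhds_zero.comp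
      ((tendsto_atTop_add_const_right _ (-a) tendsto_id).const_mul_atTop hc)).const_mul K).const_add
      (L + (M - L) / 2)
    rwa [mul_zero, add_zero] at this
  have hBM : L + (M - L) / 2 < M := by linarith
  filter_upwards [eventually_ge_atTop a, hBlim.eventually (gt_mem_nhds hBM)] with x hx hBx
  exact (hfB hx).trans_lt hBx

theorem tendsto_of_tendsto_deriv_add_mul {f f' : ℝ → ℝ} {c L : ℝ} (hc : 0 < c)
    (hf : ∀ᶠ x in atTop, HasDerivAt f (f' x) x)
    (h : Tendsto (fun x => f' x + c * f x) atTop (𝓝 (c * L))) : Tendsto f atTop (𝓝 L) := by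
  refine tendsto_order.2 ⟨fun M hM => ?_, fun M hM => ?_⟩
  · have hlow := h.eventually (lt_mem_nhds (show c * ((M + L) / 2) < c * L by nlinarith))
    have := eventually_lt_of_deriv_add_mul_le (f := -f) (f' := -f') (L := -((M + L) / 2))
      (M := -M) hc (by linarith) (hf.mono fun x hx => hx.neg)
      (hlow.mono fun x hx => by simp only [Pi.neg_apply]; linarith)
    exact this.mono fun x hx => by simp only [Pi.neg_apply] at hx; linarith
  · have hup := h.eventually (gt_mem_nhds (show c * L < c * ((L + M) / 2) by nlinarith))
    exact eventually_lt_of_deriv_add_mul_le hc (by linarith) hf (hup.mono fun x hx => hx.le)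

noncomputable def besselCoeff (ν : ℝ) (m : ℕ) : ℝ := ((m ! : ℝ) * Gamma (m + ν + 1))⁻¹

noncomputable def besselSeries (ν w : ℝ) : ℝ := ∑' m : ℕ, besselCoeff ν m * w ^ m

namespace besselCoeff

variable {ν : ℝ}

theorem pos (hν : -1 < ν) (m : ℕ) : 0 < besselCoeff ν m := by
  have : 0 < Gamma (m + ν + 1) := Gamma_pos_of_pos (by linarith [m.cast_nonneg (α := ℝ)])
  unfold besselCoeff; positivity

theorem add_one_mul_succ (ν : ℝ) (m : ℕ) :
    ((m : ℝ) + 1) * besselCoeff ν (m + 1) = besselCoeff (ν + 1) m := by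
  simp only [besselCoeff, Nat.factorial_succ, Nat.cast_mul, Nat.cast_succ, mul_inv]
  rw [show (m : ℝ) + 1 + ν + 1 = m + (ν + 1) + 1 by ring]
  field_simp

theorem eq_mul_add_one (hν : -1 < ν) (m : ℕ) :
    besselCoeff ν m = (m + ν + 1) * besselCoeff (ν + 1) m := by
  have hm : (m : ℝ) + ν + 1 ≠ 0 := by linarith [m.cast_nonneg (α := ℝ)]
  simp only [besselCoeff, show (m : ℝ) + (ν + 1) + 1 = m + ν + 1 + 1 by ring,
    Gamma_add_one hm, mul_inv]
  field_simp

theorem eq_mul_succ (hν : -1 < ν) (m : ℕ) :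
    besselCoeff ν m = (m + 1) * (m + ν + 1) * besselCoeff ν (m + 1) := by
  rw [eq_mul_add_one hν, ← add_one_mul_succ]; ring

end besselCoeff

namespace besselSeries

variable {ν : ℝ}

theorem summable (hν : -1 < ν) (w : ℝ) : Summable fun m => besselCoeff ν m * w ^ m := by
  refine summable_of_ratio_norm_eventually_le (r := 1 / 2) (by norm_num) ?_
  filter_upwards [eventually_ge_atTop (⌈2 * |w|⌉₊ + 1)] with m hm
  have hm1 : (1 : ℝ) ≤ m := by exact_mod_cast le_of_add_le_right hm
  have hmw : 2 * |w| ≤ m := (Nat.le_ceil _).trans (by exact_mod_cast le_of_add_le_left hm)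
  have ha := (besselCoeff.pos hν (m + 1)).le
  have hp : 0 ≤ |w| ^ m := by positivity
  simp only [norm_mul, norm_pow, Real.norm_eq_abs, abs_of_pos (besselCoeff.pos hν _)]
  rw [besselCoeff.eq_mul_succ hν m, pow_succ]
  have : 2 * |w| ≤ (m + 1) * (m + ν + 1) := by nlinarith
  nlinarith [mul_nonneg ha hp]

theorem hasSum (hν : -1 < ν) (w : ℝ) :
    HasSum (fun m => besselCoeff ν m * w ^ m) (besselSeries ν w) :=
  (summable hν w).hasSum

theorem pos (hν : -1 < ν) {w : ℝ} (hw : 0 ≤ w) : 0 < besselSeries ν w :=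
  (summable hν w).tsum_pos (fun m => mul_nonneg (besselCoeff.pos hν m).le (pow_nonneg hw m)) 0
    (by simpa using besselCoeff.pos hν 0)

theorem hasSum_mul_natCast_mul_pow_pred (hν : -1 < ν) (w : ℝ) :
    HasSum (fun m : ℕ => besselCoeff ν m * (m * w ^ (m - 1))) (besselSeries (ν + 1) w) := by
  have hshift (m : ℕ) : besselCoeff ν (m + 1) * (((m : ℝ) + 1) * w ^ m) =
      besselCoeff (ν + 1) m * w ^ m := by
    rw [← besselCoeff.add_one_mul_succ]; ring
  exact (hasSum_nat_add_iff' 1).mp (by simpa [hshift] using hasSum (ν := ν + 1) (by linarith) w)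

theorem hasSum_natCast_mul (hν : -1 < ν) (w : ℝ) :
    HasSum (fun m : ℕ => (m : ℝ) * (besselCoeff ν m * w ^ m)) (w * besselSeries (ν + 1) w) := by
  refine ((hasSum_mul_natCast_mul_pow_pred hν w).mul_left w).congr_fun fun m => ?_
  cases m with
  | zero => simp
  | succ m => simp only [Nat.add_sub_cancel, pow_succ]; ring

theorem hasDerivAt (hν : -1 < ν) (w : ℝ) :
    HasDerivAt (besselSeries ν) (besselSeries (ν + 1) w) w := by
  have hR : 0 < |w| + 1 := by positivity
  have hw : w ∈ Metric.ball (0 : ℝ) (|w| + 1) := by simp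
  rw [← (hasSum_mul_natCast_mul_pow_pred hν w).tsum_eq]
  refine hasDerivAt_tsum_of_isPreconnected (g := fun m y => besselCoeff ν m * y ^ m)
    (hasSum_mul_natCast_mul_pow_pred hν (|w| + 1)).summable
    Metric.isOpen_ball (convex_ball 0 (|w| + 1)).isPreconnected
    (fun m y _ => (hasDerivAt_pow m y).const_mul _) (fun m y hy => ?_)
    (Metric.mem_ball_self hR) (summable hν 0) hw
  have hy' : ‖y‖ ≤ |w| + 1 := by simpa using (Metric.mem_ball.mp hy).le
  have ha := (besselCoeff.pos hν m).le
  rw [norm_mul, norm_mul, Real.norm_of_nonneg ha, norm_pow, RCLike.norm_natCast]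
  gcongr

theorem eq_add (hν : -1 < ν) (w : ℝ) :
    besselSeries ν w = (ν + 1) * besselSeries (ν + 1) w + w * besselSeries (ν + 2) w := by
  have hν' : -1 < ν + 1 := by linarith
  have hterm (m : ℕ) : besselCoeff ν m * w ^ m =
      (ν + 1) * (besselCoeff (ν + 1) m * w ^ m) + m * (besselCoeff (ν + 1) m * w ^ m) := by
    rw [besselCoeff.eq_mul_add_one hν]; ring
  rw [show ν + 2 = ν + 1 + 1 by ring]
  refine HasSum.tsum_eq ?_
  simpa only [← hterm] using ((hasSum hν' w).mul_left (ν + 1)).add (hasSum_natCast_mul hν' w)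

theorem hasDerivAt_sq (hν : -1 < ν) (s : ℝ) :
    HasDerivAt (fun s => besselSeries ν (s ^ 2)) (2 * s * besselSeries (ν + 1) (s ^ 2)) s := by
  refine ((hasDerivAt hν (s ^ 2)).comp s (hasDerivAt_pow 2 s)).congr_deriv ?_
  push_cast; ring

theorem mul_add_one_sq_lt (hν : -1 / 2 ≤ ν) {s : ℝ} (hs : 0 ≤ s) :
    s * besselSeries (ν + 1) (s ^ 2) < besselSeries ν (s ^ 2) := by
  have hν₁ : -1 < ν := by linarith
  have hν₂ : -1 < ν + 1 := by linarith
  -- By `eq_add`, `u t = S_ν(t²) - t S_{ν+1}(t²)` solves `u' + 2u = (2ν + 1) S_{ν+1}(t²) ≥ 0`.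
  let W : ℝ → ℝ := fun t =>
    exp (2 * t) * (besselSeries ν (t ^ 2) - t * besselSeries (ν + 1) (t ^ 2))
  have hW (t : ℝ) :
      HasDerivAt W (exp (2 * t) * ((2 * ν + 1) * besselSeries (ν + 1) (t ^ 2))) t := by
    have h : HasDerivAt W _ t := (((hasDerivAt_id' t).const_mul 2).exp).mul
      ((hasDerivAt_sq hν₁ t).sub ((hasDerivAt_id' t).mul (hasDerivAt_sq hν₂ t)))
    refine h.congr_deriv ?_
    rw [show ν + 1 + 1 = ν + 2 by ring]
    linear_combination (2 * exp (2 * t)) * eq_add hν₁ (t ^ 2)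
  have hW_mono : Monotone W := monotone_of_hasDerivAt_nonneg hW fun t =>
    mul_nonneg (exp_pos _).le (mul_nonneg (by linarith) (pos hν₂ (sq_nonneg t)).le)
  have hW0 : 0 < W 0 := by simpa [W] using pos hν₁ le_rfl
  have : 0 < W s := hW0.trans_le (hW_mono hs)
  have := (mul_pos_iff_of_pos_left (exp_pos (2 * s))).mp this
  linarith

end besselSeries

section besselI

variable {ν z : ℝ}

theorem besselI_eq_rpow_mul_besselSeries (ν : ℝ) (hz : 0 < z) :
    besselI ν z = (z / 2) ^ ν * besselSeries ν ((z / 2) ^ 2) := by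
  rw [besselI, besselSeries, ← tsum_mul_left]
  refine tsum_congr fun m => ?_
  rw [show 2 * (m : ℝ) + ν = ν + (2 * m : ℕ) by push_cast; ring, rpow_add (by positivity),
    rpow_natCast, pow_mul, besselCoeff, div_eq_mul_inv]
  ring

theorem besselI_add_one_eq (ν : ℝ) (hz : 0 < z) :
    besselI (ν + 1) z = (z / 2) ^ ν * (z / 2 * besselSeries (ν + 1) ((z / 2) ^ 2)) := by
  rw [besselI_eq_rpow_mul_besselSeries _ hz, rpow_add_one (by positivity), mul_assoc]

theorem besselI_pos (hν : -1 < ν) (hz : 0 < z) : 0 < besselI ν z := by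
  rw [besselI_eq_rpow_mul_besselSeries ν hz]
  exact mul_pos (by positivity) (besselSeries.pos hν (by positivity))

theorem besselI_add_one_lt (hν : -1 / 2 ≤ ν) (hz : 0 < z) : besselI (ν + 1) z < besselI ν z := by
  rw [besselI_add_one_eq ν hz, besselI_eq_rpow_mul_besselSeries ν hz]
  exact mul_lt_mul_of_pos_left (besselSeries.mul_add_one_sq_lt hν (by positivity)) (by positivity)

theorem besselI_eq_add (hν : -1 < ν) (hz : 0 < z) :
    besselI ν z = 2 * (ν + 1) / z * besselI (ν + 1) z + besselI (ν + 2) z := by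
  rw [show ν + 2 = ν + 1 + 1 by ring, besselI_add_one_eq (ν + 1) hz, besselI_add_one_eq ν hz,
    besselI_eq_rpow_mul_besselSeries ν hz, rpow_add_one (by positivity),
    besselSeries.eq_add hν, show ν + 1 + 1 = ν + 2 by ring]
  field_simp

theorem hasDerivAt_besselI (hν : -1 < ν) (hz : 0 < z) :
    HasDerivAt (besselI ν) (besselI (ν + 1) z + ν / z * besselI ν z) z := by
  have hhalf := (hasDerivAt_id' z).div_const 2
  have h := (hhalf.rpow_const (p := ν) (Or.inl (by positivity))).mul
    ((besselSeries.hasDerivAt_sq hν (z / 2)).comp z hhalf)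
  have hI : besselI ν =ᶠ[𝓝 z] fun y => (y / 2) ^ ν * besselSeries ν ((y / 2) ^ 2) := by
    filter_upwards [Ioi_mem_nhds hz] with y hy using besselI_eq_rpow_mul_besselSeries ν hy
  refine (h.congr_of_eventuallyEq hI).congr_deriv ?_
  rw [besselI_add_one_eq ν hz, besselI_eq_rpow_mul_besselSeries ν hz, rpow_sub_one (by positivity),
    Function.comp_apply]
  field_simp
  ring

theorem hasDerivAt_besselI_add_one (hν : -1 < ν) (hz : 0 < z) :
    HasDerivAt (besselI (ν + 1)) (besselI ν z - (ν + 1) / z * besselI (ν + 1) z) z := by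
  refine (hasDerivAt_besselI (by linarith) hz).congr_deriv ?_
  rw [besselI_eq_add hν hz, show ν + 1 + 1 = ν + 2 by ring]
  field_simp
  ring

end besselI

noncomputable def besselRatioGap (α z : ℝ) : ℝ := z * (1 - besselI (α + 1) z / besselI α z)

section besselRatioGap

variable {α z : ℝ}

theorem besselRatioGap_pos (hα : -1 / 2 ≤ α) (hz : 0 < z) : 0 < besselRatioGap α z := by
  have hI : 0 < besselI α z := besselI_pos (by linarith) hz
  have hlt : besselI (α + 1) z / besselI α z < 1 := (div_lt_one hI).2 (besselI_add_one_lt hα hz)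
  exact mul_pos hz (by linarith)

theorem besselRatioGap_le (hα : -1 / 2 ≤ α) (hz : 0 < z) : besselRatioGap α z ≤ 2 * (α + 1) := by
  have hI : 0 < besselI α z := besselI_pos (by linarith) hz
  have h₁ := besselI_add_one_lt hα hz
  have h₂ : besselI (α + 2) z < besselI (α + 1) z := by
    rw [show α + 2 = α + 1 + 1 by ring]
    exact besselI_add_one_lt (by linarith) hz
  -- `z (I_α - I_{α+1}) = 2 (α + 1) I_{α+1} - z (I_{α+1} - I_{α+2}) ≤ 2 (α + 1) I_α`
  have hrec : z * besselI α z = 2 * (α + 1) * besselI (α + 1) z + z * besselI (α + 2) z := by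
    rw [besselI_eq_add (by linarith) hz]
    field_simp
  have hgap : besselRatioGap α z = (z * besselI α z - z * besselI (α + 1) z) / besselI α z := by
    rw [besselRatioGap]
    field_simp
  rw [hgap, div_le_iff₀ hI]
  nlinarith [mul_lt_mul_of_pos_left h₂ hz]

theorem hasDerivAt_besselRatioGap (hα : -1 < α) (hz : 0 < z) :
    HasDerivAt (besselRatioGap α)
      (2 * α + 1 - 2 * besselRatioGap α z +
        besselRatioGap α z * (besselRatioGap α z - 2 * α) / z) z := by
  have hI := (besselI_pos hα hz).ne'
  have h := (hasDerivAt_id' z).mul ((hasDerivAt_const z 1).sub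
    ((hasDerivAt_besselI_add_one hα hz).div (hasDerivAt_besselI hα hz) hI))
  refine h.congr_deriv ?_
  simp only [besselRatioGap, Pi.sub_apply, Pi.div_apply]
  field_simp
  ring

theorem tendsto_besselRatioGap (hα : -1 / 2 ≤ α) :
    Tendsto (besselRatioGap α) atTop (𝓝 (α + 1 / 2)) := by
  set H := besselRatioGap α
  have hbound : ∀ᶠ z in atTop, ‖H z * (H z - 2 * α) / z‖ ≤ (2 * α + 2) * (2 + 2 * |α|) * z⁻¹ := by
    filter_upwards [eventually_gt_atTop 0] with z hz
    have h₀ : 0 < H z := besselRatioGap_pos hα hz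
    have h₁ : H z ≤ 2 * (α + 1) := besselRatioGap_le hα hz
    rw [norm_div, Real.norm_eq_abs, Real.norm_eq_abs, abs_of_pos hz, div_eq_mul_inv]
    gcongr
    rw [abs_le]
    constructor <;> nlinarith [abs_nonneg α, neg_abs_le α, le_abs_self α]
  have hsmall : Tendsto (fun z => H z * (H z - 2 * α) / z) atTop (𝓝 0) := by
    refine squeeze_zero_norm' hbound ?_
    simpa using tendsto_inv_atTop_zero.const_mul ((2 * α + 2) * (2 + 2 * |α|))
  refine tendsto_of_tendsto_deriv_add_mul
    (f' := fun z => 2 * α + 1 - 2 * H z + H z * (H z - 2 * α) / z) two_pos ?_ ?_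
  · filter_upwards [eventually_gt_atTop 0] with z hz
    exact hasDerivAt_besselRatioGap (by linarith) hz
  · convert hsmall.const_add (2 * α + 1) using 1
    · funext z; ring
    · congr 1; ring

end besselRatioGap

/-- For `α ≥ 0` and `b > 0`,
`x (1 − I_{α+1}(bx)/I_α(bx)) → (2α+1)/(2b)` as `x → ∞`. -/
theorem besselI_ratio_limit (α b : ℝ) (hα : 0 ≤ α) (hb : 0 < b) :
    Tendsto (fun x : ℝ => x * (1 - besselI (α + 1) (b * x) / besselI α (b * x)))
      atTop (nhds ((2 * α + 1) / (2 * b))) := by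
  have hlim := ((tendsto_besselRatioGap (by linarith : -1 / 2 ≤ α)).comp
    (tendsto_id.const_mul_atTop hb)).div_const b
  convert hlim using 1
  · funext x
    simp only [Function.comp_apply, id, besselRatioGap]
    field_simp
  · field_simp
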